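/- arXiv:1812.11575 — 3 statements merged into one kernel-verified Lean document; each statement's English description precedes it below -/
import Mathlib

section
/- Let G be a group acting on a topological space X by homeomorphisms, Y a T1 topological space, and π : X → Y a pseudo-quotient (continuous, surjective, G-invariant, separating disjoint closed invariant sets as in the definition). Then for any x₁, x₂ ∈ X, π(x₁) = π(x₂) if and only if the closures of the orbits G·x₁ and G·x₂ in X intersect. -/
/-- A pseudo-quotient: a continuous, surjective, `G`-invariant map such that disjoint
closed `G`-invariant subsets of `X` have disjoint image-closures in `Y`. -/
def IsPseudoQuotient (G : Type*) [Group G] {X Y : Type*} [TopologicalSpace X]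
    [TopologicalSpace Y] [MulAction G X] (π : X → Y) : Prop :=
  Continuous π ∧ Function.Surjective π ∧ (∀ (g : G) (x : X), π (g • x) = π x) ∧
    ∀ W₁ W₂ : Set X, IsClosed W₁ → IsClosed W₂ →
      (∀ (g : G), ∀ x ∈ W₁, g • x ∈ W₁) → (∀ (g : G), ∀ x ∈ W₂, g • x ∈ W₂) →
      Disjoint W₁ W₂ → Disjoint (closure (π '' W₁)) (closure (π '' W₂))

/-! The fibres of a pseudo-quotient are closed and invariant, so they contain orbit closures;
conversely, two disjoint orbit closures are disjoint closed invariant sets, so the separation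
property puts their images, and hence `π x₁` and `π x₂`, apart. -/

section OrbitClosure

variable {M X Y : Type*} [Monoid M] [TopologicalSpace X] [MulAction M X]

theorem smul_mem_closure_orbit [ContinuousConstSMul M X] {x y : X} (g : M)
    (hy : y ∈ closure (MulAction.orbit M x)) : g • y ∈ closure (MulAction.orbit M x) :=
  map_mem_closure (continuous_const_smul g) hy fun _ hz => MulAction.mem_orbit_of_mem_orbit g hz

theorem apply_eq_of_mem_closure_orbit [TopologicalSpace Y] [T1Space Y] {f : X → Y}
    (hf : Continuous f) (hinv : ∀ (g : M) (x : X), f (g • x) = f x) {x y : X}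
    (hy : y ∈ closure (MulAction.orbit M x)) : f y = f x := by
  have hfib : MulAction.orbit M x ⊆ f ⁻¹' {f x} := by
    rintro _ ⟨g, rfl⟩
    exact hinv g x
  exact (isClosed_singleton.preimage hf).closure_subset_iff.mpr hfib hy

end OrbitClosure

theorem stmt_15 {G X Y : Type*} [Group G] [TopologicalSpace X] [TopologicalSpace Y]
    [MulAction G X] [ContinuousConstSMul G X] [T1Space Y] (π : X → Y)
    (hπ : IsPseudoQuotient G π) (x₁ x₂ : X) :
    π x₁ = π x₂ ↔
      (closure (MulAction.orbit G x₁) ∩ closure (MulAction.orbit G x₂)).Nonempty := by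
  obtain ⟨hcont, -, hinv, hsep⟩ := hπ
  have self_mem_closure_image (x : X) : π x ∈ closure (π '' closure (MulAction.orbit G x)) :=
    subset_closure ⟨x, subset_closure (MulAction.mem_orbit_self x), rfl⟩
  constructor
  · intro heq
    by_contra hempty
    rw [Set.not_nonempty_iff_eq_empty, ← Set.disjoint_iff_inter_eq_empty] at hempty
    have hdisj := hsep _ _ isClosed_closure isClosed_closure
      (fun g _ => smul_mem_closure_orbit g) (fun g _ => smul_mem_closure_orbit g) hempty
    exact hdisj.ne_of_mem (self_mem_closure_image x₁) (self_mem_closure_image x₂) heq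
  · rintro ⟨z, hz₁, hz₂⟩
    rw [← apply_eq_of_mem_closure_orbit hcont hinv hz₁,
      apply_eq_of_mem_closure_orbit hcont hinv hz₂]
end

section
/- Let G be a group acting on a topological space X by homeomorphisms, Y a T1 space, and π : X → Y a pseudo-quotient. Suppose X = Y₀ ⊔ U where Y₀ ⊆ X is closed and G-invariant and U ⊆ X is open and orbitwise-closed (for every u ∈ U the closure of G·u is contained in U). Then Y = π(Y₀) ⊔ π(U) with π(Y₀) closed and π(U) open in Y, U is saturated (π⁻¹(π(U)) = U), and the restriction π|_U : U → π(U) is again a pseudo-quotient for the G-action on U. -/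
open Set MulAction

lemma isClosed_of_union_eq_univ_of_disjoint_closure {Y : Type*} [TopologicalSpace Y]
    {A B : Set Y} (hAB : A ∪ B = univ) (h : Disjoint (closure A) B) : IsClosed A :=
  isClosed_of_closure_subset <| h.subset_compl_right.trans <|
    compl_subset_iff_union.mpr (union_comm A B ▸ hAB)

lemma smul_mem_closure_of_forall_smul_mem {G X : Type*} [Monoid G] [TopologicalSpace X]
    [MulAction G X] [ContinuousConstSMul G X] {S : Set X}
    (hS : ∀ (g : G), ∀ x ∈ S, g • x ∈ S) (g : G) : ∀ x ∈ closure S, g • x ∈ closure S :=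
  fun _ hx => MapsTo.closure (hS g) (continuous_const_smul g) hx

namespace IsPseudoQuotient

variable {G X Y : Type*} [Group G] [TopologicalSpace X] [TopologicalSpace Y] [MulAction G X]
  {π : X → Y}

protected lemma continuous (hπ : IsPseudoQuotient G π) : Continuous π := hπ.1

protected lemma surjective (hπ : IsPseudoQuotient G π) : Function.Surjective π := hπ.2.1

lemma apply_smul (hπ : IsPseudoQuotient G π) (g : G) (x : X) : π (g • x) = π x := hπ.2.2.1 g x

lemma disjoint_closure_image_image (hπ : IsPseudoQuotient G π) {W₁ W₂ : Set X}
    (hW₁ : IsClosed W₁) (hW₂ : IsClosed W₂) (hW₁inv : ∀ (g : G), ∀ x ∈ W₁, g • x ∈ W₁)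
    (hW₂inv : ∀ (g : G), ∀ x ∈ W₂, g • x ∈ W₂) (hW : Disjoint W₁ W₂) :
    Disjoint (closure (π '' W₁)) (closure (π '' W₂)) :=
  hπ.2.2.2 W₁ W₂ hW₁ hW₂ hW₁inv hW₂inv hW

lemma apply_eq_of_mem_closure_orbit [T1Space Y] (hπ : IsPseudoQuotient G π) {x z : X}
    (hz : z ∈ closure (orbit G x)) : π z = π x := by
  have hmaps : MapsTo π (orbit G x) {π x} := by
    rintro _ ⟨g, rfl⟩
    exact hπ.apply_smul g x
  exact hmaps.closure_left hπ.continuous isClosed_singleton hz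

variable [ContinuousConstSMul G X]

lemma apply_notMem_closure_image (hπ : IsPseudoQuotient G π) {C : Set X} (hC : IsClosed C)
    (hCinv : ∀ (g : G), ∀ x ∈ C, g • x ∈ C) {x : X} (hx : Disjoint C (closure (orbit G x))) :
    π x ∉ closure (π '' C) := fun hmem =>
  (hπ.disjoint_closure_image_image hC isClosed_closure hCinv
      (smul_mem_closure_of_forall_smul_mem fun g _ => mem_orbit_of_mem_orbit g) hx).ne_of_mem
    hmem (subset_closure ⟨x, subset_closure (mem_orbit_self x), rfl⟩) rfl

lemma disjoint_closure_image (hπ : IsPseudoQuotient G π) {C U : Set X} (hC : IsClosed C)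
    (hCinv : ∀ (g : G), ∀ x ∈ C, g • x ∈ C) (hUorb : ∀ u ∈ U, closure (orbit G u) ⊆ U)
    (hCU : Disjoint C U) : Disjoint (closure (π '' C)) (π '' U) := by
  rw [disjoint_right]
  rintro _ ⟨u, hu, rfl⟩
  exact hπ.apply_notMem_closure_image hC hCinv (hCU.mono_right (hUorb u hu))

lemma exists_mem_closure_orbit_of_apply_mem_closure_image (hπ : IsPseudoQuotient G π)
    {U W : Set X} (hW : U ∩ closure W ⊆ W) (hWinv : ∀ (g : G), ∀ x ∈ W, g • x ∈ W) {x : X}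
    (hxU : closure (orbit G x) ⊆ U) (hx : π x ∈ closure (π '' W)) :
    ∃ w ∈ W, w ∈ closure (orbit G x) := by
  by_contra! hmiss
  have hdisj : Disjoint (closure W) (closure (orbit G x)) :=
    disjoint_left.mpr fun z hzW hzx => hmiss z (hW ⟨hxU hzx, hzW⟩) hzx
  refine hπ.apply_notMem_closure_image isClosed_closure
    (smul_mem_closure_of_forall_smul_mem hWinv) hdisj ?_
  rwa [closure_image_closure hπ.continuous]

lemma disjoint_closure_image_inter [T1Space Y] (hπ : IsPseudoQuotient G π)
    {U W₁ W₂ : Set X} (hUorb : ∀ u ∈ U, closure (orbit G u) ⊆ U) (hW₁U : W₁ ⊆ U)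
    (hW₁ : U ∩ closure W₁ ⊆ W₁) (hW₂ : U ∩ closure W₂ ⊆ W₂)
    (hW₁inv : ∀ (g : G), ∀ x ∈ W₁, g • x ∈ W₁) (hW₂inv : ∀ (g : G), ∀ x ∈ W₂, g • x ∈ W₂)
    (hW : Disjoint W₁ W₂) :
    Disjoint (closure (π '' W₁) ∩ π '' U) (closure (π '' W₂) ∩ π '' U) := by
  rw [disjoint_left]
  rintro _ ⟨hy₁, u, hu, rfl⟩ ⟨hy₂, -⟩
  obtain ⟨w₁, hw₁, hw₁u⟩ :=
    hπ.exists_mem_closure_orbit_of_apply_mem_closure_image hW₁ hW₁inv (hUorb u hu) hy₁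
  have horbit₁ : closure (orbit G w₁) ⊆ U := hUorb w₁ (hW₁U hw₁)
  rw [← hπ.apply_eq_of_mem_closure_orbit hw₁u] at hy₂
  obtain ⟨w₂, hw₂, hw₂w₁⟩ :=
    hπ.exists_mem_closure_orbit_of_apply_mem_closure_image hW₂ hW₂inv horbit₁ hy₂
  have horbit_sub : orbit G w₁ ⊆ W₁ := by
    rintro _ ⟨g, rfl⟩
    exact hW₁inv g w₁ hw₁
  exact disjoint_left.mp hW (hW₁ ⟨horbit₁ hw₂w₁, closure_mono horbit_sub hw₂w₁⟩) hw₂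

end IsPseudoQuotient

theorem stmt_16_general {G X Y : Type*} [Group G] [TopologicalSpace X] [TopologicalSpace Y]
    [MulAction G X] [ContinuousConstSMul G X] [T1Space Y] (π : X → Y)
    (hπ : IsPseudoQuotient G π) (Y₀ U : Set X) (hY₀ : IsClosed Y₀)
    (hY₀inv : ∀ (g : G), ∀ x ∈ Y₀, g • x ∈ Y₀)
    (hUorb : ∀ u ∈ U, closure (MulAction.orbit G u) ⊆ U)
    (hdisj : Disjoint Y₀ U) (hcover : Y₀ ∪ U = Set.univ) :
    IsClosed (π '' Y₀) ∧ IsOpen (π '' U) ∧ Disjoint (π '' Y₀) (π '' U) ∧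
      π '' Y₀ ∪ π '' U = Set.univ ∧ π ⁻¹' (π '' U) = U ∧
      (Continuous fun u : U => π ↑u) ∧
      (∀ y ∈ π '' U, ∃ u : U, π ↑u = y) ∧
      (∀ W₁ W₂ : Set X, W₁ ⊆ U → W₂ ⊆ U →
        IsClosed {u : U | (u : X) ∈ W₁} → IsClosed {u : U | (u : X) ∈ W₂} →
        (∀ (g : G), ∀ x ∈ W₁, g • x ∈ W₁) → (∀ (g : G), ∀ x ∈ W₂, g • x ∈ W₂) →
        Disjoint W₁ W₂ →
        Disjoint (closure (π '' W₁) ∩ π '' U) (closure (π '' W₂) ∩ π '' U)) := by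
  have himg_cover : π '' Y₀ ∪ π '' U = univ := by
    rw [← image_union, hcover, image_univ, hπ.surjective.range_eq]
  have hsep := hπ.disjoint_closure_image hY₀ hY₀inv hUorb hdisj
  have hY₀closed := isClosed_of_union_eq_univ_of_disjoint_closure himg_cover hsep
  have hXcompl : IsCompl Y₀ U := ⟨hdisj, codisjoint_iff.mpr hcover⟩
  have hYcompl : IsCompl (π '' Y₀) (π '' U) :=
    ⟨hsep.mono_left subset_closure, codisjoint_iff.mpr himg_cover⟩
  have hrel : ∀ W ⊆ U, IsClosed {u : U | (u : X) ∈ W} → U ∩ closure W ⊆ W := fun W hWU hW => by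
    simpa only [inter_eq_right.mpr hWU] using isClosed_preimage_val.mp hW
  refine ⟨hY₀closed, hYcompl.compl_eq ▸ hY₀closed.isOpen_compl, hYcompl.disjoint, himg_cover,
    ?_, hπ.continuous.comp continuous_subtype_val, ?_, fun W₁ W₂ hW₁U hW₂U hW₁ hW₂ =>
      hπ.disjoint_closure_image_inter hUorb hW₁U (hrel W₁ hW₁U hW₁) (hrel W₂ hW₂U hW₂)⟩
  · refine (subset_preimage_image π U).antisymm' ?_
    calc π ⁻¹' (π '' U) = (π ⁻¹' (π '' Y₀))ᶜ := by rw [← hYcompl.compl_eq, preimage_compl]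
      _ ⊆ Y₀ᶜ := compl_subset_compl.mpr (subset_preimage_image π Y₀)
      _ = U := hXcompl.compl_eq
  · rintro _ ⟨u, hu, rfl⟩
    exact ⟨⟨u, hu⟩, rfl⟩

theorem stmt_16 {G X Y : Type*} [Group G] [TopologicalSpace X] [TopologicalSpace Y]
    [MulAction G X] [ContinuousConstSMul G X] [T1Space Y] (π : X → Y)
    (hπ : IsPseudoQuotient G π) (Y₀ U : Set X) (hY₀ : IsClosed Y₀)
    (hY₀inv : ∀ (g : G), ∀ x ∈ Y₀, g • x ∈ Y₀) (hU : IsOpen U)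
    (hUorb : ∀ u ∈ U, closure (MulAction.orbit G u) ⊆ U)
    (hdisj : Disjoint Y₀ U) (hcover : Y₀ ∪ U = Set.univ) :
    IsClosed (π '' Y₀) ∧ IsOpen (π '' U) ∧ Disjoint (π '' Y₀) (π '' U) ∧
      π '' Y₀ ∪ π '' U = Set.univ ∧ π ⁻¹' (π '' U) = U ∧
      (Continuous fun u : U => π ↑u) ∧
      (∀ y ∈ π '' U, ∃ u : U, π ↑u = y) ∧
      (∀ W₁ W₂ : Set X, W₁ ⊆ U → W₂ ⊆ U →
        IsClosed {u : U | (u : X) ∈ W₁} → IsClosed {u : U | (u : X) ∈ W₂} →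
        (∀ (g : G), ∀ x ∈ W₁, g • x ∈ W₁) → (∀ (g : G), ∀ x ∈ W₂, g • x ∈ W₂) →
        Disjoint W₁ W₂ →
        Disjoint (closure (π '' W₁) ∩ π '' U) (closure (π '' W₂) ∩ π '' U)) :=
  stmt_16_general π hπ Y₀ U hY₀ hY₀inv hUorb hdisj hcover
end

section
/- Let R be a commutative ring and M, N two R-modules. Suppose there are R-linear maps μ : M ⊗_R N → R and ε : R → N ⊗_R M such that the composite M ≅ M ⊗_R R → M ⊗_R (N ⊗_R M) ≅ (M ⊗_R N) ⊗_R M → R ⊗_R M ≅ M, given by (id_M ⊗ ε) followed by (μ ⊗ id_M), is the identity on M. Then M is a finitely generated R-module. (Zorro's lemma / finite generation forced by duality data.) -/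
open TensorProduct

theorem Module.Finite.of_forall_eq_sum_smul {R M ι : Type*} [Semiring R] [AddCommMonoid M]
    [Module R M] (s : Finset ι) (m : ι → M) (c : ι → M → R)
    (h : ∀ x, x = ∑ i ∈ s, c i x • m i) : Module.Finite R M := by
  classical
  refine ⟨⟨s.image m, eq_top_iff.2 fun x _ => ?_⟩⟩
  rw [h x]
  exact Submodule.sum_mem _ fun i hi => Submodule.smul_mem _ _
    (Submodule.subset_span (Finset.mem_image_of_mem m hi))

theorem TensorProduct.lid_rTensor_assoc_symm_tmul_sum {R M N : Type*} [CommSemiring R]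
    [AddCommMonoid M] [Module R M] [AddCommMonoid N] [Module R N]
    (μ : M ⊗[R] N →ₗ[R] R) (x : M) (s : Finset (N × M)) :
    TensorProduct.lid R M (μ.rTensor M ((TensorProduct.assoc R M N M).symm
        (x ⊗ₜ ∑ p ∈ s, p.1 ⊗ₜ p.2))) = ∑ p ∈ s, μ (x ⊗ₜ p.1) • p.2 := by
  simp only [tmul_sum, map_sum, assoc_symm_tmul, LinearMap.rTensor_tmul, lid_tmul]

open TensorProduct in
theorem stmt_17 {R M N : Type*} [CommRing R] [AddCommGroup M] [Module R M]
    [AddCommGroup N] [Module R N]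
    (μ : M ⊗[R] N →ₗ[R] R) (ε : R →ₗ[R] N ⊗[R] M)
    (h : (TensorProduct.lid R M).toLinearMap ∘ₗ LinearMap.rTensor M μ ∘ₗ
        (TensorProduct.assoc R M N M).symm.toLinearMap ∘ₗ LinearMap.lTensor M ε ∘ₗ
        (TensorProduct.rid R M).symm.toLinearMap = LinearMap.id) :
    Module.Finite R M := by
  obtain ⟨s, hs⟩ := TensorProduct.exists_finset (ε 1)
  refine .of_forall_eq_sum_smul s Prod.snd (fun p x => μ (x ⊗ₜ p.1)) fun x => ?_
  have hx := LinearMap.congr_fun h x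
  simp only [LinearMap.comp_apply, LinearEquiv.coe_coe, rid_symm_apply, LinearMap.lTensor_tmul,
    hs, lid_rTensor_assoc_symm_tmul_sum, LinearMap.id_apply] at hx
  exact hx.symm
end
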